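/- Dyer's formula: in the Hecke algebra of the universal Coxeter group U_n, for x with (unique) reduced expression x = r s ⋯: (1) b_r b_x = (v + v⁻¹) b_x; (2) b_t b_x = b_{tx} if t ∉ {r,s}; (3) b_s b_x = b_{sx} + b_{rx} if s ≠ r. -/

import Mathlib

open LaurentPolynomial

/-- The Bruhat order on a Coxeter group: `y ≤ x` if some subword of some (equivalently,
every) reduced word for `x` is a reduced word for `y`. -/
def CoxeterSystem.bruhatLE {B W : Type*} [Group W] {M : CoxeterMatrix B}
    (cs : CoxeterSystem M W) (y x : W) : Prop :=
  ∃ ω : List B, cs.IsReduced ω ∧ cs.wordProd ω = x ∧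
    ∃ ω' : List B, ω'.Sublist ω ∧ cs.IsReduced ω' ∧ cs.wordProd ω' = y

/-- The strict Bruhat order. -/
def CoxeterSystem.bruhatLT {B W : Type*} [Group W] {M : CoxeterMatrix B}
    (cs : CoxeterSystem M W) (y x : W) : Prop :=
  cs.bruhatLE y x ∧ y ≠ x

/-- Membership in `v·ℤ[v] ⊆ ℤ[v, v⁻¹]`, where `v = T 1`. -/
def MemVZv (p : LaurentPolynomial ℤ) : Prop :=
  ∃ q : Polynomial ℤ, p = q.toLaurent * T 1

/-!
In `Uₙ` a word is reduced iff no two adjacent letters are equal: the generators permute such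
words (`toggle`), such a word `ω` is the image of the empty word under `π ω`, and the image of
the empty word under `w` has length at most `ℓ w`. Hence every `y ≠ 1` has a unique left descent,
the first letter of its word.

Write `x = a u` and let `μ(y, x)` be the coefficient of `v` in the `h_y`-coordinate of `b_x`.
A self-dual element whose `h`-coordinates all lie in `vℤ[v]` is `0`, since its coordinate at
an element of maximal length is fixed by `v ↦ v⁻¹`. Applied to
`b_t b_x - b_{tx} - [u starts with t] b_u` for `t ≠ a`, this proves that difference is `0` as
soon as `μ(y, x) = [y = u]` for all `y` with a left descent `t ≠ a`. The same identity
for `x = c r` and `t = a` gives `b_{a c r} = b_a b_{c r} - [r starts with a] b_r`, from which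
the value of `μ` for `a c r` and `b_a b_{a c r} = (v + v⁻¹) b_{a c r}` follow by induction on
the length, starting from `b_s = h_s + v` and `b_s² = (v + v⁻¹) b_s`.
-/

namespace LaurentPolynomial

@[simp]
theorem coeff_mul_T {R : Type*} [Semiring R] (p : R[T;T⁻¹]) (n k : ℤ) :
    (p * T n).coeff k = p.coeff (k - n) := by
  rw [T, AddMonoidAlgebra.coeff_mul_single_apply, mul_one, sub_eq_add_neg]

theorem coeff_one_eq_ite {R : Type*} [Semiring R] (k : ℤ) :
    (1 : R[T;T⁻¹]).coeff k = if k = 0 then 1 else 0 := by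
  rw [← T_zero, T_apply]
  simp only [eq_comm]

theorem coeff_toLaurent_of_neg {R : Type*} [Semiring R] (f : Polynomial R) {k : ℤ} (hk : k < 0) :
    f.toLaurent.coeff k = 0 := by
  rw [← Finsupp.notMem_support_iff, support_coeff_toLaurent]
  simp only [Finset.mem_map, Nat.castEmbedding_apply, not_exists, not_and]
  omega

theorem eq_zero_of_invert_eq_self {R : Type*} [CommSemiring R] {p : R[T;T⁻¹]}
    (hp : ∀ k ≤ 0, p.coeff k = 0) (hinv : invert p = p) : p = 0 := by
  refine LaurentPolynomial.ext fun k => ?_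
  rcases le_or_gt k 0 with hk | hk
  · exact hp k hk
  · rw [← hinv, invert_apply, hp (-k) (by omega)]
    rfl

end LaurentPolynomial

theorem MemVZv.coeff_eq_zero {p : ℤ[T;T⁻¹]} (hp : MemVZv p) {k : ℤ} (hk : k ≤ 0) :
    p.coeff k = 0 := by
  obtain ⟨q, rfl⟩ := hp
  rw [coeff_mul_T, coeff_toLaurent_of_neg q (by omega)]

/-- `m_{ij} = ∞` for all `i ≠ j` (Mathlib encodes `∞` as `0`). -/
def CoxeterMatrix.IsUniversal {B : Type*} (M : CoxeterMatrix B) : Prop :=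
  ∀ i j : B, i ≠ j → M i j = 0

abbrev AlternatingWord (B : Type*) := {ω : List B // ω.IsChain (· ≠ ·)}

namespace AlternatingWord

variable {B : Type*} [DecidableEq B]

/-- Left multiplication by `s t` on the normal forms of the universal Coxeter group. -/
def toggle (t : B) (ω : AlternatingWord B) : AlternatingWord B :=
  if h : ω.1.head? = some t then ⟨ω.1.tail, ω.2.tail⟩
  else ⟨t :: ω.1, List.isChain_cons.mpr ⟨fun _ ha e => h (e ▸ ha), ω.2⟩⟩

theorem toggle_of_head_ne {t : B} {ω : AlternatingWord B} (h : ω.1.head? ≠ some t) :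
    (toggle t ω).1 = t :: ω.1 := by
  simp [toggle, h]

theorem toggle_involutive (t : B) : Function.Involutive (toggle t) := by
  rintro ⟨_ | ⟨a, ω⟩, hω⟩
  · simp [toggle]
  · by_cases hat : a = t
    · subst hat
      have hne : ω.head? ≠ some a := by
        rcases ω with _ | ⟨c, ω⟩
        · simp
        · simpa [eq_comm] using (List.isChain_cons_cons.mp hω).1
      simp [toggle, hne]
    · simp [toggle, hat]

theorem length_toggle_le (t : B) (ω : AlternatingWord B) :
    (toggle t ω).1.length ≤ ω.1.length + 1 := by
  unfold toggle
  split <;> simp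
  omega

end AlternatingWord

namespace CoxeterSystem

variable {B W : Type*} [Group W] {M : CoxeterMatrix B}

theorem IsReduced.isChain_ne {cs : CoxeterSystem M W} {ω : List B} (hω : cs.IsReduced ω) :
    ω.IsChain (· ≠ ·) := by
  induction ω with
  | nil => exact List.isChain_nil
  | cons a ω ih =>
    refine List.isChain_cons.mpr ⟨?_, ih (by simpa using hω.drop 1)⟩
    rintro _ ha rfl
    obtain ⟨ω', rfl⟩ : ∃ ω', ω = a :: ω' := ⟨ω.tail, (List.cons_head?_tail ha).symm⟩
    have hπ : cs.wordProd (a :: a :: ω') = cs.wordProd ω' := by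
      rw [wordProd_cons, wordProd_cons, simple_mul_simple_cancel_left]
    have hle := cs.length_wordProd_le ω'
    have hlen : cs.length (cs.wordProd (a :: a :: ω')) = ω'.length + 2 := hω
    rw [hπ] at hlen
    omega

variable (cs : CoxeterSystem M W)

local prefix:100 "π" => cs.wordProd
local prefix:100 "ℓ" => cs.length
local prefix:100 "s" => cs.simple

theorem simple_mul_eq_iff {t : B} {w z : W} : s t * w = z ↔ w = s t * z :=
  ⟨fun h => by rw [← h, simple_mul_simple_cancel_left],
    fun h => by rw [h, simple_mul_simple_cancel_left]⟩

theorem length_lt_of_bruhatLT {y x : W} (h : cs.bruhatLT y x) : ℓ y < ℓ x := by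
  obtain ⟨⟨ω, hω, rfl, ω', hsub, hω', rfl⟩, hne⟩ := h
  rw [hω, hω']
  refine lt_of_le_of_ne hsub.length_le fun hlen => hne ?_
  rw [hsub.eq_of_length hlen]

section Universal

open scoped Classical

noncomputable def alternatingWordAction (hM : M.IsUniversal) :
    W →* Equiv.Perm (AlternatingWord B) :=
  cs.lift ⟨fun t => (AlternatingWord.toggle_involutive t).toPerm,
    show M.IsLiftable _ from fun i i' => by
      by_cases hii : i = i'
      · subst hii
        rw [M.diagonal i, pow_one]
        ext ω
        simp [Function.Involutive.coe_toPerm, AlternatingWord.toggle_involutive i ω]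
      · rw [hM i i' hii, pow_zero]⟩

theorem alternatingWordAction_simple (hM : M.IsUniversal) (t : B) (ω : AlternatingWord B) :
    cs.alternatingWordAction hM (s t) ω = AlternatingWord.toggle t ω := by
  rw [alternatingWordAction, lift_apply_simple]
  rfl

theorem length_alternatingWordAction_wordProd_le (hM : M.IsUniversal) (ω : List B)
    (α : AlternatingWord B) :
    (cs.alternatingWordAction hM (π ω) α).1.length ≤ ω.length + α.1.length := by
  induction ω with
  | nil => simp
  | cons t ω ih =>
    rw [wordProd_cons, map_mul, Equiv.Perm.mul_apply, alternatingWordAction_simple]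
    grw [AlternatingWord.length_toggle_le, ih]
    simp only [List.length_cons]
    omega

theorem alternatingWordAction_wordProd_nil (hM : M.IsUniversal) {ω : List B}
    (hω : ω.IsChain (· ≠ ·)) :
    cs.alternatingWordAction hM (π ω) ⟨[], .nil⟩ = ⟨ω, hω⟩ := by
  induction ω with
  | nil => simp
  | cons t ω ih =>
    rw [wordProd_cons, map_mul, Equiv.Perm.mul_apply, alternatingWordAction_simple,
      ih hω.tail]
    refine Subtype.ext (AlternatingWord.toggle_of_head_ne ?_)
    intro ht
    exact (List.isChain_cons.mp hω).1 t ht rfl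

theorem isReduced_of_isChain_ne (hM : M.IsUniversal) {ω : List B} (hω : ω.IsChain (· ≠ ·)) :
    cs.IsReduced ω := by
  refine le_antisymm (cs.length_wordProd_le ω) ?_
  obtain ⟨ω', hω', hπ⟩ := cs.exists_isReduced (π ω)
  have := cs.length_alternatingWordAction_wordProd_le hM ω' ⟨[], .nil⟩
  rw [← hπ, alternatingWordAction_wordProd_nil cs hM hω] at this
  rw [hπ, hω'.eq]
  simpa using this

theorem isLeftDescent_wordProd_iff (hM : M.IsUniversal) {ω : List B} (hω : ω.IsChain (· ≠ ·))
    (t : B) : cs.IsLeftDescent (π ω) t ↔ ω.head? = some t := by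
  rw [IsLeftDescent, cs.isReduced_of_isChain_ne hM hω]
  constructor
  · intro hlt
    by_contra ht
    have htω : (t :: ω).IsChain (· ≠ ·) :=
      List.isChain_cons.mpr ⟨fun _ ha e => ht (e ▸ ha), hω⟩
    have := cs.isReduced_of_isChain_ne hM htω
    rw [IsReduced, wordProd_cons] at this
    simp [this] at hlt
  · intro ht
    obtain ⟨ω', rfl⟩ : ∃ ω', ω = t :: ω' := ⟨ω.tail, (List.cons_head?_tail ht).symm⟩
    rw [wordProd_cons, simple_mul_simple_cancel_left]
    grw [cs.length_wordProd_le]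
    simp

theorem eq_of_isLeftDescent_of_isLeftDescent (hM : M.IsUniversal) {w : W} {t t' : B}
    (ht : cs.IsLeftDescent w t) (ht' : cs.IsLeftDescent w t') : t = t' := by
  obtain ⟨ω, hω, rfl⟩ := cs.exists_isReduced w
  rw [cs.isLeftDescent_wordProd_iff hM hω.isChain_ne] at ht ht'
  exact Option.some.inj (ht.symm.trans ht')

end Universal

end CoxeterSystem

/-- A Hecke algebra of `(W, S)` over `ℤ[v, v⁻¹]` (`v = T 1`) with its standard basis `h` and
its Kazhdan–Lusztig involution `d`. -/
structure HeckeAlgebraData {B W : Type*} [Group W] {M : CoxeterMatrix B}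
    (cs : CoxeterSystem M W) (H : Type*) [Ring H] [Algebra ℤ[T;T⁻¹] H] where
  h : Module.Basis W ℤ[T;T⁻¹] H
  d : H →+* H
  h_one : h 1 = 1
  h_simple_mul_of_length_lt : ∀ (i : B) (x : W), cs.length x < cs.length (cs.simple i * x) →
    h (cs.simple i) * h x = h (cs.simple i * x)
  h_simple_mul_of_isLeftDescent : ∀ (i : B) (x : W), cs.IsLeftDescent x i →
    h (cs.simple i) * h x = h (cs.simple i * x) + (T (-1) - T 1 : ℤ[T;T⁻¹]) • h x
  d_smul : ∀ (p : ℤ[T;T⁻¹]) (a : H), d (p • a) = invert p • d a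
  d_h : ∀ x : W, d (h x) = Ring.inverse (h x⁻¹)

namespace HeckeAlgebraData

open CoxeterSystem
open scoped Classical

variable {B W : Type*} [Group W] {M : CoxeterMatrix B} {cs : CoxeterSystem M W}
  {H : Type*} [Ring H] [Algebra ℤ[T;T⁻¹] H] (𝓗 : HeckeAlgebraData cs H)

local prefix:100 "ℓ" => cs.length
local prefix:100 "s" => cs.simple

theorem h_simple_mul (t : B) (w : W) :
    𝓗.h (s t) * 𝓗.h w = 𝓗.h (s t * w) +
      if cs.IsLeftDescent w t then (T (-1) - T 1 : ℤ[T;T⁻¹]) • 𝓗.h w else 0 := by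
  split_ifs with ht
  · exact 𝓗.h_simple_mul_of_isLeftDescent t w ht
  · rw [cs.not_isLeftDescent_iff] at ht
    rw [add_zero, 𝓗.h_simple_mul_of_length_lt t w (by omega)]

theorem repr_h_simple_mul (t : B) (c : H) (z : W) :
    𝓗.h.repr (𝓗.h (s t) * c) z = 𝓗.h.repr c (s t * z) +
      if cs.IsLeftDescent z t then (T (-1) - T 1) * 𝓗.h.repr c z else 0 := by
  let coord (y : W) : H →ₗ[ℤ[T;T⁻¹]] ℤ[T;T⁻¹] :=
    Finsupp.lapply y ∘ₗ 𝓗.h.repr.toLinearMap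
  have key : coord z ∘ₗ LinearMap.mulLeft ℤ[T;T⁻¹] (𝓗.h (s t)) = coord (s t * z) +
      (if cs.IsLeftDescent z t then (T (-1) - T 1 : ℤ[T;T⁻¹]) else 0) • coord z := by
    refine 𝓗.h.ext fun w => ?_
    simp only [coord, LinearMap.comp_apply, LinearMap.mulLeft_apply, LinearMap.add_apply,
      LinearMap.smul_apply, Finsupp.lapply_apply, LinearEquiv.coe_coe, h_simple_mul, map_add,
      Module.Basis.repr_self, smul_eq_mul]
    have hswap : Finsupp.single (s t * w) (1 : ℤ[T;T⁻¹]) z = Finsupp.single w 1 (s t * z) := by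
      simp only [Finsupp.single_apply, cs.simple_mul_eq_iff]
    rw [hswap]
    by_cases hw : w = z
    · subst hw
      split_ifs <;> simp
    · split_ifs <;> simp [Finsupp.single_apply, hw]
  have := LinearMap.congr_fun key c
  simp only [coord, LinearMap.comp_apply, LinearMap.mulLeft_apply, LinearMap.add_apply,
    LinearMap.smul_apply, Finsupp.lapply_apply, LinearEquiv.coe_coe, smul_eq_mul] at this
  rw [this]
  split_ifs <;> ring

theorem h_simple_mul_self (t : B) :
    𝓗.h (s t) * 𝓗.h (s t) = 1 + (T (-1) - T 1 : ℤ[T;T⁻¹]) • 𝓗.h (s t) := by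
  rw [𝓗.h_simple_mul_of_isLeftDescent t (s t) (by simp [IsLeftDescent]),
    simple_mul_simple_self, 𝓗.h_one]

theorem d_h_simple (t : B) :
    𝓗.d (𝓗.h (s t)) = 𝓗.h (s t) + (T 1 - T (-1) : ℤ[T;T⁻¹]) • 1 := by
  let u : Hˣ := ⟨𝓗.h (s t), 𝓗.h (s t) + (T 1 - T (-1) : ℤ[T;T⁻¹]) • 1,
    by rw [mul_add, 𝓗.h_simple_mul_self, mul_smul_comm, mul_one]; module,
    by rw [add_mul, 𝓗.h_simple_mul_self, smul_mul_assoc, one_mul]; module⟩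
  rw [𝓗.d_h, inv_simple]
  exact Ring.inverse_unit u

theorem repr_d_h_of_length_le {y z : W} (hyz : ℓ y ≤ ℓ z) :
    𝓗.h.repr (𝓗.d (𝓗.h y)) z = if z = y then 1 else 0 := by
  induction hn : ℓ y using Nat.strong_induction_on generalizing y z with
  | _ n ih =>
  subst hn
  by_cases hy : y = 1
  · subst hy
    rw [𝓗.h_one, map_one, ← 𝓗.h_one, Module.Basis.repr_self, Finsupp.single_apply]
    simp only [eq_comm]
  obtain ⟨t, ht⟩ := cs.exists_leftDescent_of_ne_one hy
  obtain ⟨y', rfl⟩ : ∃ y', y = s t * y' := ⟨s t * y, by simp⟩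
  have hlen : ℓ y' + 1 = ℓ (s t * y') := by
    have := cs.isLeftDescent_iff.mp ht
    rw [simple_mul_simple_cancel_left] at this
    omega
  have hz : 𝓗.h.repr (𝓗.d (𝓗.h y')) z = 0 := by
    rw [ih (ℓ y') (by omega) (y := y') (by omega) rfl, if_neg]
    rintro rfl
    omega
  have htz : ℓ y' ≤ ℓ (s t * z) := by
    rcases cs.length_simple_mul z t with h | h <;> omega
  rw [← 𝓗.h_simple_mul_of_length_lt t y' (by omega), map_mul, d_h_simple, add_mul,
    smul_mul_assoc, one_mul, map_add, map_smul, Finsupp.add_apply, Finsupp.smul_apply,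
    repr_h_simple_mul, hz, ih (ℓ y') (by omega) htz rfl, cs.simple_mul_eq_iff]
  simp

theorem eq_zero_of_d_eq_self {c : H} (hc : 𝓗.d c = c)
    (hcoeff : ∀ z, ∀ k ≤ 0, (𝓗.h.repr c z).coeff k = 0) : c = 0 := by
  by_contra hne
  have hsupp : (𝓗.h.repr c).support.Nonempty := by simpa using hne
  obtain ⟨y, hy, hmax⟩ := (𝓗.h.repr c).support.exists_max_image cs.length hsupp
  have hd : 𝓗.h.repr (𝓗.d c) y = invert (𝓗.h.repr c y) := by
    conv_lhs => rw [← 𝓗.h.linearCombination_repr c, Finsupp.linearCombination_apply]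
    simp only [map_finsuppSum, 𝓗.d_smul, map_smul]
    rw [Finsupp.sum_apply, Finsupp.sum, Finset.sum_eq_single_of_mem y hy]
    · rw [Finsupp.smul_apply, 𝓗.repr_d_h_of_length_le le_rfl, if_pos rfl, smul_eq_mul, mul_one]
    · intro z hz hzy
      rw [Finsupp.smul_apply, 𝓗.repr_d_h_of_length_le (hmax z hz), if_neg (Ne.symm hzy),
        smul_zero]
  exact Finsupp.mem_support_iff.mp hy
    (eq_zero_of_invert_eq_self (hcoeff y) (by rw [← hd, hc]))

theorem eq_of_d_eq_self {c c' : H} (hc : 𝓗.d c = c) (hc' : 𝓗.d c' = c')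
    (hcoeff : ∀ z, ∀ k ≤ 0, (𝓗.h.repr c z).coeff k = (𝓗.h.repr c' z).coeff k) :
    c = c' :=
  sub_eq_zero.mp <| 𝓗.eq_zero_of_d_eq_self (by rw [map_sub, hc, hc']) fun z k hk => by
    simp [hcoeff z k hk]

/-- `μ(y, a u) = [y = u]` for every `y` with a left descent other than `a`, where `μ(y, x)` is
the coefficient of `v` in the `h_y`-coordinate of `b x`. -/
def MuFormula (b : W → H) (a : B) (u : List B) : Prop :=
  ∀ t y, t ≠ a → cs.IsLeftDescent y t →
    (𝓗.h.repr (b (cs.wordProd (a :: u))) y).coeff 1 = if y = cs.wordProd u then 1 else 0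

end HeckeAlgebraData

structure IsKLBasis {B W : Type*} [Group W] {M : CoxeterMatrix B} {cs : CoxeterSystem M W}
    {H : Type*} [Ring H] [Algebra ℤ[T;T⁻¹] H] (𝓗 : HeckeAlgebraData cs H) (b : W → H) :
    Prop where
  d_b : ∀ x, 𝓗.d (b x) = b x
  repr_b_self : ∀ x, 𝓗.h.repr (b x) x = 1
  repr_b_of_ne : ∀ x y, y ≠ x →
    MemVZv (𝓗.h.repr (b x) y) ∧ (𝓗.h.repr (b x) y ≠ 0 → cs.bruhatLT y x)

namespace IsKLBasis

open CoxeterSystem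
open scoped Classical

variable {B W : Type*} [Group W] {M : CoxeterMatrix B} {cs : CoxeterSystem M W}
  {H : Type*} [Ring H] [Algebra ℤ[T;T⁻¹] H] {𝓗 : HeckeAlgebraData cs H} {b : W → H}
  (hb : IsKLBasis 𝓗 b)

local prefix:100 "π" => cs.wordProd
local prefix:100 "ℓ" => cs.length
local prefix:100 "s" => cs.simple

include hb

theorem coeff_repr_of_ne {x y : W} (hyx : y ≠ x) {k : ℤ} (hk : k ≤ 0) :
    (𝓗.h.repr (b x) y).coeff k = 0 :=
  (hb.repr_b_of_ne x y hyx).1.coeff_eq_zero hk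

theorem coeff_repr_of_neg (x y : W) {k : ℤ} (hk : k < 0) : (𝓗.h.repr (b x) y).coeff k = 0 := by
  by_cases hyx : y = x
  · rw [hyx, hb.repr_b_self, coeff_one_eq_ite, if_neg hk.ne]
  · exact hb.coeff_repr_of_ne hyx hk.le

theorem repr_eq_zero_of_length_le {x y : W} (hyx : y ≠ x) (hxy : ℓ x ≤ ℓ y) :
    𝓗.h.repr (b x) y = 0 := by
  by_contra hne
  have := cs.length_lt_of_bruhatLT ((hb.repr_b_of_ne x y hyx).2 hne)
  omega

theorem b_simple (t : B) : b (s t) = 𝓗.h (s t) + (T 1 : ℤ[T;T⁻¹]) • 1 := by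
  refine 𝓗.eq_of_d_eq_self (hb.d_b _) ?_ fun z k hk => ?_
  · rw [map_add, 𝓗.d_smul, 𝓗.d_h_simple, map_one, invert_T]
    module
  · have hst : s t ≠ 1 := fun h => by simpa [h] using cs.length_simple t
    rw [map_add, map_smul, ← 𝓗.h_one, Finsupp.add_apply, Finsupp.smul_apply,
      Module.Basis.repr_self, Module.Basis.repr_self]
    by_cases hz : z = s t
    · subst hz
      simp [hb.repr_b_self, hst]
    · rw [hb.coeff_repr_of_ne hz hk]
      by_cases hz1 : z = 1
      · subst hz1
        simp [Ne.symm hst, hk.trans_lt zero_lt_one |>.ne']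
      · simp [Ne.symm hz, Ne.symm hz1]

theorem coeff_repr_b_simple_mul (t : B) (c : H) (z : W) (k : ℤ) :
    (𝓗.h.repr (b (s t) * c) z).coeff k = (𝓗.h.repr c (s t * z)).coeff k +
      (𝓗.h.repr c z).coeff (if cs.IsLeftDescent z t then k + 1 else k - 1) := by
  rw [hb.b_simple, add_mul, smul_mul_assoc, one_mul, map_add, map_smul, Finsupp.add_apply,
    Finsupp.smul_apply, 𝓗.repr_h_simple_mul, smul_eq_mul]
  split_ifs
  · rw [add_assoc, ← add_mul, sub_add_cancel]
    simp
  · simp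

theorem b_simple_mul_self (t : B) :
    b (s t) * b (s t) = (T 1 + T (-1) : ℤ[T;T⁻¹]) • b (s t) := by
  have hT : (T 1 * T (-1) : ℤ[T;T⁻¹]) = 1 := by rw [← T_add]; simp
  rw [hb.b_simple, add_mul, mul_add, mul_add, 𝓗.h_simple_mul_self, mul_smul_comm, mul_one,
    smul_mul_assoc, one_mul, smul_mul_assoc, one_mul, smul_smul]
  match_scalars
  · linear_combination -hT
  · ring

theorem muFormula_nil (hM : M.IsUniversal) (a : B) : 𝓗.MuFormula b a [] := by
  intro t y hta hy
  have hy1 : y ≠ 1 := by rintro rfl; exact cs.not_isLeftDescent_one t hy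
  have hya : y ≠ s a := by
    rintro rfl
    exact hta (cs.eq_of_isLeftDescent_of_isLeftDescent hM hy (by simp [IsLeftDescent]))
  have hlen : ℓ (s a) ≤ ℓ y := by
    rw [cs.length_simple]
    exact Nat.one_le_iff_ne_zero.mpr fun h => hy1 (cs.length_eq_zero_iff.mp h)
  rw [wordProd_singleton, hb.repr_eq_zero_of_length_le hya hlen, wordProd_nil, if_neg hy1]
  rfl

theorem coeff_repr_b_cons_of_muFormula (hM : M.IsUniversal) {a t : B} {u : List B}
    (hω : (a :: u).IsChain (· ≠ ·)) (hta : t ≠ a) (hmu : 𝓗.MuFormula b a u) (z : W)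
    {k : ℤ} (hk : k ≤ 0) :
    (𝓗.h.repr (b (π (a :: u))) z).coeff (if cs.IsLeftDescent z t then k + 1 else k - 1) =
      if u.head? = some t then (𝓗.h.repr (b (π u)) z).coeff k else 0 := by
  have hdesc_u : cs.IsLeftDescent (π u) t ↔ u.head? = some t :=
    cs.isLeftDescent_wordProd_iff hM hω.tail t
  by_cases hzt : cs.IsLeftDescent z t
  · have hzx : z ≠ π (a :: u) := by
      rintro rfl
      exact hta (Option.some.inj ((cs.isLeftDescent_wordProd_iff hM hω t).mp hzt)).symm
    rw [if_pos hzt]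
    rcases hk.lt_or_eq with hk | rfl
    · rw [hb.coeff_repr_of_ne hzx (by omega : k + 1 ≤ 0)]
      split_ifs <;> simp [hb.coeff_repr_of_neg _ _ hk]
    · rw [zero_add, hmu t z hta hzt]
      by_cases hzu : z = π u
      · rw [if_pos hzu, if_pos (hdesc_u.mp (hzu ▸ hzt)), hzu, hb.repr_b_self]
        simp
      · rw [if_neg hzu, hb.coeff_repr_of_ne hzu le_rfl]
        simp
  · rw [if_neg hzt, hb.coeff_repr_of_neg _ _ (by omega)]
    split_ifs with hp
    · rw [hb.coeff_repr_of_ne (by rintro rfl; exact hzt (hdesc_u.mpr hp)) hk]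
    · rfl

theorem simple_mul_b_of_muFormula (hM : M.IsUniversal) {a t : B} {u : List B}
    (hω : (a :: u).IsChain (· ≠ ·)) (hta : t ≠ a) (hmu : 𝓗.MuFormula b a u) :
    b (s t) * b (π (a :: u)) =
      b (s t * π (a :: u)) + if u.head? = some t then b (π u) else 0 := by
  have hlen : ℓ (s t * π (a :: u)) = ℓ (π (a :: u)) + 1 := by
    rw [← cs.not_isLeftDescent_iff, cs.isLeftDescent_wordProd_iff hM hω]
    simpa using hta.symm
  have hlen_x : ℓ (π (a :: u)) = u.length + 1 := cs.isReduced_of_isChain_ne hM hω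
  have hite : ∀ z k, (𝓗.h.repr (if u.head? = some t then b (π u) else 0) z).coeff k =
      if u.head? = some t then (𝓗.h.repr (b (π u)) z).coeff k else 0 := by
    intro z k
    split_ifs <;> simp
  refine 𝓗.eq_of_d_eq_self (by simp [hb.d_b]) (by simp [hb.d_b, apply_ite 𝓗.d])
    fun z k hk => ?_
  rw [hb.coeff_repr_b_simple_mul, map_add, Finsupp.add_apply, AddMonoidAlgebra.coeff_add,
    Finsupp.add_apply, hite]
  by_cases hz : z = s t * π (a :: u)
  · have htx_u : s t * π (a :: u) ≠ π u := by
      intro h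
      have := cs.length_wordProd_le u
      rw [← h] at this
      omega
    rw [hz, simple_mul_simple_cancel_left, hb.repr_b_self, hb.repr_b_self,
      hb.repr_eq_zero_of_length_le (fun h => by rw [h] at hlen; omega) (by omega),
      hb.coeff_repr_of_ne htx_u hk]
    simp
  · have htz : s t * z ≠ π (a :: u) := fun h => hz (cs.simple_mul_eq_iff.mp h)
    rw [hb.coeff_repr_of_ne htz hk, hb.coeff_repr_of_ne hz hk, zero_add, zero_add,
      hb.coeff_repr_b_cons_of_muFormula hM hω hta hmu z hk]

theorem b_cons_cons_of_muFormula (hM : M.IsUniversal) {a c : B} {r : List B}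
    (hω : (a :: c :: r).IsChain (· ≠ ·)) (hmu : 𝓗.MuFormula b c r) :
    b (π (a :: c :: r)) =
      b (s a) * b (π (c :: r)) - if r.head? = some a then b (π r) else 0 := by
  rw [hb.simple_mul_b_of_muFormula hM hω.tail (List.isChain_cons_cons.mp hω).1 hmu,
    ← wordProd_cons, add_sub_cancel_right]

theorem muFormula_cons (hM : M.IsUniversal) {a c : B} {r : List B}
    (hω : (a :: c :: r).IsChain (· ≠ ·)) (hmu : 𝓗.MuFormula b c r)
    (hmu' : ∀ r', r = a :: r' → 𝓗.MuFormula b a r') : 𝓗.MuFormula b a (c :: r) := by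
  intro t y hta hy
  have hya : ¬ cs.IsLeftDescent y a := fun h =>
    hta (cs.eq_of_isLeftDescent_of_isLeftDescent hM hy h)
  have hay : cs.IsLeftDescent (s a * y) a := by
    rwa [cs.isLeftDescent_iff_not_isLeftDescent_mul, simple_mul_simple_cancel_left]
  have hcancel : (𝓗.h.repr (if r.head? = some a then b (π r) else 0) y).coeff 1 =
      if s a * y = π r then 1 else 0 := by
    by_cases hr : r.head? = some a
    · obtain ⟨r', rfl⟩ : ∃ r', r = a :: r' := ⟨r.tail, (List.cons_head?_tail hr).symm⟩
      have hiff : s a * y = π (a :: r') ↔ y = π r' := by rw [wordProd_cons, mul_right_inj]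
      rw [if_pos hr, hmu' r' rfl t y hta hy, if_congr hiff rfl rfl]
    · have hayr : s a * y ≠ π r := by
        intro h
        have hy' : y = π (a :: r) := by rw [wordProd_cons, ← cs.simple_mul_eq_iff, h]
        have har : (a :: r).IsChain (· ≠ ·) :=
          List.isChain_cons.mpr ⟨fun _ h e => hr (e ▸ h), hω.tail.tail⟩
        rw [hy', cs.isLeftDescent_wordProd_iff hM har] at hy
        exact hta (Option.some.inj hy).symm
      rw [if_neg hr, if_neg hayr]
      simp
  rw [hb.b_cons_cons_of_muFormula hM hω hmu, map_sub, Finsupp.sub_apply,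
    AddMonoidAlgebra.coeff_sub, Finsupp.sub_apply, hb.coeff_repr_b_simple_mul, if_neg hya,
    hmu a (s a * y) (List.isChain_cons_cons.mp hω).1 hay, hcancel, add_sub_cancel_left, sub_self]
  by_cases hyu : y = π (c :: r)
  · rw [hyu, hb.repr_b_self, if_pos rfl]
    simp
  · rw [hb.coeff_repr_of_ne hyu le_rfl, if_neg hyu]

theorem muFormula (hM : M.IsUniversal) :
    ∀ {a : B} {u : List B}, (a :: u).IsChain (· ≠ ·) → 𝓗.MuFormula b a u
  | a, [], _ => hb.muFormula_nil hM a
  | _, [c], hω => hb.muFormula_cons hM hω (hb.muFormula_nil hM c) (by simp)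
  | a, c :: d :: r, hω => hb.muFormula_cons hM hω (muFormula hM hω.tail) fun r' hr => by
      obtain ⟨rfl, rfl⟩ := List.cons.inj hr
      exact muFormula hM hω.tail.tail

theorem simple_mul_b_cons (hM : M.IsUniversal) {a t : B} {u : List B}
    (hω : (a :: u).IsChain (· ≠ ·)) (hta : t ≠ a) :
    b (s t) * b (π (a :: u)) =
      b (s t * π (a :: u)) + if u.head? = some t then b (π u) else 0 :=
  hb.simple_mul_b_of_muFormula hM hω hta (hb.muFormula hM hω)

theorem simple_mul_b_cons_self (hM : M.IsUniversal) {a : B} {u : List B}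
    (hω : (a :: u).IsChain (· ≠ ·)) :
    b (s a) * b (π (a :: u)) = (T 1 + T (-1) : ℤ[T;T⁻¹]) • b (π (a :: u)) := by
  match u, hω with
  | [], _ => rw [wordProd_singleton, hb.b_simple_mul_self]
  | c :: r, hω =>
    have hrest : b (s a) * (if r.head? = some a then b (π r) else 0) =
        (T 1 + T (-1) : ℤ[T;T⁻¹]) • if r.head? = some a then b (π r) else 0 := by
      split_ifs with hr
      · obtain ⟨r', rfl⟩ : ∃ r', r = a :: r' := ⟨r.tail, (List.cons_head?_tail hr).symm⟩
        exact simple_mul_b_cons_self hM hω.tail.tail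
      · simp
    rw [hb.b_cons_cons_of_muFormula hM hω (hb.muFormula hM hω.tail), mul_sub, ← mul_assoc,
      hb.b_simple_mul_self, smul_mul_assoc, hrest, smul_sub]
termination_by u.length

end IsKLBasis

/-- **Dyer's formula.** In the Hecke algebra of the universal Coxeter
group `Uₙ` (all `m_{sr} = ∞` for `s ≠ r`), for `x` with (unique) reduced expression
`x = r s ⋯`: (1) `b_r bₓ = (v + v⁻¹) bₓ`; (2) `b_t bₓ = b_{tx}` if `t ∉ {r, s}`;
(3) `bₛ bₓ = b_{sx} + b_{rx}` (here `s ≠ r`). -/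
theorem hecke_dyer_formula {B W : Type*} [Group W] {M : CoxeterMatrix B} (cs : CoxeterSystem M W)
    {H : Type*} [Ring H] [Algebra (LaurentPolynomial ℤ) H]
    -- `h` is the standard basis of the Hecke algebra `H` of `(W, S)` over `ℤ[v, v⁻¹]`,
    -- where `v` is the Laurent variable `T 1`
    (h : Module.Basis W (LaurentPolynomial ℤ) H) (h_one : h 1 = 1)
    -- the multiplication rules characterizing the Hecke algebra:
    -- `hₛ hₓ = h_{sx}` if `sx > x`, and `hₛ hₓ = h_{sx} + (v⁻¹ - v) hₓ` if `sx < x`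
    (h_mul_gt : ∀ (i : B) (x : W), cs.length (cs.simple i * x) > cs.length x →
      h (cs.simple i) * h x = h (cs.simple i * x))
    (h_mul_lt : ∀ (i : B) (x : W), cs.length (cs.simple i * x) < cs.length x →
      h (cs.simple i) * h x = h (cs.simple i * x) + ((T (-1) - T 1 : LaurentPolynomial ℤ)) • h x)
    -- `d` is the Kazhdan–Lusztig duality: the ring endomorphism of `H` with
    -- `d(v·a) = v⁻¹·d(a)` and `d(hₓ) = (h_{x⁻¹})⁻¹`
    (d : H →+* H)
    (hd_smul : ∀ (p : LaurentPolynomial ℤ) (a : H), d (p • a) = (invert p) • d a)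
    (hd_h : ∀ x : W, d (h x) = Ring.inverse (h (x⁻¹)))
    -- `b x` is the Kazhdan–Lusztig basis element: the unique self-dual element with
    -- `b x ∈ hₓ + ∑_{y < x} v ℤ[v] h_y`
    (b : W → H)
    (hb_self : ∀ x : W, d (b x) = b x)
    (hb_diag : ∀ x : W, h.repr (b x) x = 1)
    (hb_tri : ∀ x y : W, y ≠ x →
      MemVZv (h.repr (b x) y) ∧ ((h.repr (b x)) y ≠ 0 → cs.bruhatLT y x))
    (huniv : ∀ i j : B, i ≠ j → M i j = 0)
    (i j : B) (hij : i ≠ j) (ω : List B) (hred : cs.IsReduced (i :: j :: ω)) :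
    b (cs.simple i) * b (cs.wordProd (i :: j :: ω)) =
        ((T 1 + T (-1) : LaurentPolynomial ℤ)) • b (cs.wordProd (i :: j :: ω)) ∧
    (∀ t : B, t ≠ i → t ≠ j →
      b (cs.simple t) * b (cs.wordProd (i :: j :: ω)) =
        b (cs.simple t * cs.wordProd (i :: j :: ω))) ∧
    b (cs.simple j) * b (cs.wordProd (i :: j :: ω)) =
      b (cs.simple j * cs.wordProd (i :: j :: ω)) +
        b (cs.simple i * cs.wordProd (i :: j :: ω)) := by
  let 𝓗 : HeckeAlgebraData cs H := ⟨h, d, h_one, h_mul_gt, h_mul_lt, hd_smul, hd_h⟩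
  have hb : IsKLBasis 𝓗 b := ⟨hb_self, hb_diag, hb_tri⟩
  have hω := hred.isChain_ne
  refine ⟨hb.simple_mul_b_cons_self huniv hω, fun t hti htj => ?_, ?_⟩
  · simpa [Ne.symm htj] using hb.simple_mul_b_cons huniv hω hti
  · simpa [cs.wordProd_cons i (j :: ω)] using hb.simple_mul_b_cons huniv hω (Ne.symm hij)
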